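/- If a 2×2 unitary matrix T satisfies (T ⊗ T)·XOR = XOR·(T ⊗ T), where XOR is the controlled-not gate on ℂ²⊗ℂ², then T = e^{iθ}·I for some real θ. -/

import Mathlib

open Matrix Kronecker

noncomputable def XOR : Matrix (Fin 2 × Fin 2) (Fin 2 × Fin 2) ℂ :=
  fun p q => if p.1 = q.1 ∧ p.2 = q.1 + q.2 then 1 else 0

/-! Entrywise, `(T ⊗ T) * XOR = XOR * (T ⊗ T)` reads `T x u * T y (u + v) = T x u * T (x + y) v`.
Cancelling a nonzero off-diagonal entry of `T` would make two rows or two columns of `T` equal,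
which invertibility forbids; so `T` is diagonal, and cancelling `T 1 1` gives `T 0 0 = T 1 1`.
Unitarity then makes this scalar a complex number of modulus one. -/

def cnot (R : Type*) [Zero R] [One R] : Matrix (Fin 2 × Fin 2) (Fin 2 × Fin 2) R :=
  fun p q => if p.1 = q.1 ∧ p.2 = q.1 + q.2 then 1 else 0

theorem XOR_eq_cnot : XOR = cnot ℂ := rfl

theorem Fin.two_eq_add_iff (x y q : Fin 2) : y = x + q ↔ q = x + y := by
  revert x y q; decide

section Commutant

variable {R : Type*}

theorem kronecker_self_mul_cnot_apply [CommSemiring R] (T : Matrix (Fin 2) (Fin 2) R)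
    (x y u v : Fin 2) : (T ⊗ₖ T * cnot R) (x, y) (u, v) = T x u * T y (u + v) := by
  simp [mul_apply, cnot, Fintype.sum_prod_type, ite_and]

theorem cnot_mul_kronecker_self_apply [CommSemiring R] (T : Matrix (Fin 2) (Fin 2) R)
    (x y u v : Fin 2) : (cnot R * T ⊗ₖ T) (x, y) (u, v) = T x u * T (x + y) v := by
  simp only [mul_apply, cnot, Fintype.sum_prod_type, Fin.two_eq_add_iff]
  simp [ite_and]

theorem eq_smul_one_of_kronecker_self_commute_cnot [CommRing R] [IsDomain R]
    {T : Matrix (Fin 2) (Fin 2) R} (hdet : T.det ≠ 0)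
    (hcomm : T ⊗ₖ T * cnot R = cnot R * T ⊗ₖ T) : T = T 0 0 • 1 := by
  have key (x y u v : Fin 2) (h : T x u ≠ 0) : T y (u + v) = T (x + y) v := by
    refine mul_left_cancel₀ h ?_
    simpa only [kronecker_self_mul_cnot_apply, cnot_mul_kronecker_self_apply] using
      congrFun (congrFun hcomm (x, y)) (u, v)
  rw [det_fin_two] at hdet
  have hb : T 0 1 = 0 := by
    by_contra hb
    have hac : T 0 0 = T 0 1 := by simpa using key 0 0 1 1 hb
    have hcd : T 1 0 = T 1 1 := by simpa using key 0 1 1 1 hb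
    exact hdet (by rw [hac, hcd]; ring)
  have hc : T 1 0 = 0 := by
    by_contra hc
    have hac : T 0 0 = T 1 0 := by simpa using key 1 0 0 0 hc
    have hbd : T 0 1 = T 1 1 := by simpa using key 1 0 0 1 hc
    exact hdet (by rw [hac, hbd]; ring)
  have hd : T 1 1 ≠ 0 := by
    rintro hd
    exact hdet (by rw [hb, hd]; ring)
  have had : T 0 0 = T 1 1 := by simpa using key 1 0 1 1 hd
  ext i j
  fin_cases i <;> fin_cases j <;> simp [hb, hc, had]

end Commutant

theorem norm_eq_one_of_smul_one_mem_unitaryGroup {n : Type*} [Fintype n] [DecidableEq n]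
    [Nonempty n] {a : ℂ} (h : a • (1 : Matrix n n ℂ) ∈ unitaryGroup n ℂ) : ‖a‖ = 1 := by
  obtain ⟨i⟩ := ‹Nonempty n›
  have ha : a ∈ unitary ℂ := by
    rw [Unitary.mem_iff_star_mul_self]
    simpa using congrFun (congrFun h.2 i) i
  exact CStarRing.norm_of_mem_unitary ha

theorem xor_commutant (T : Matrix (Fin 2) (Fin 2) ℂ)
    (hT : T ∈ Matrix.unitaryGroup (Fin 2) ℂ)
    (hcomm : (T ⊗ₖ T) * XOR = XOR * (T ⊗ₖ T)) :
    ∃ θ : ℝ, T = Complex.exp (θ * Complex.I) • 1 := by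
  have hdet : T.det ≠ 0 := (UnitaryGroup.det_isUnit ⟨T, hT⟩).ne_zero
  have hscalar := eq_smul_one_of_kronecker_self_commute_cnot hdet (XOR_eq_cnot ▸ hcomm)
  obtain ⟨θ, hθ⟩ := (Complex.norm_eq_one_iff _).mp
    (norm_eq_one_of_smul_one_mem_unitaryGroup (hscalar ▸ hT))
  exact ⟨θ, hθ ▸ hscalar⟩
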